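/- arXiv:2502.11635 — 3 statements merged into one kernel-verified Lean document; each statement's English description precedes it below -/
import Mathlib

section
/- If \(\mathfrak{n}\) is a finite-dimensional nilpotent real Lie algebra containing a pointed, generating, closed convex cone \(C\) that is invariant under all inner automorphisms \(e^{\operatorname{ad} x}\), \(x \in \mathfrak{n}\), then \(\mathfrak{n}\) is abelian. -/
/-- The exponential `e^{ad x}` of the adjoint operator of `x`.  Since the Lie algebra is
nilpotent and finite-dimensional, `ad x` is nilpotent with `(ad x)^k = 0` for
`k ≥ finrank ℝ L`, so the truncated sum below coincides with the full exponential series. -/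
noncomputable def expAd (L : Type*) [LieRing L] [LieAlgebra ℝ L]
    [Module.Finite ℝ L] (x : L) : Module.End ℝ L :=
  ∑ k ∈ Finset.range (Module.finrank ℝ L + 1),
    (k.factorial : ℝ)⁻¹ • (LieAlgebra.ad ℝ L x ^ k)

/-- If a finite-dimensional nilpotent real Lie algebra contains a pointed, generating,
closed convex cone invariant under all inner automorphisms `e^{ad x}`, then it is abelian. -/
theorem nilpotent_with_invariant_pointed_generating_cone_is_abelian
    (L : Type*) [LieRing L] [LieAlgebra ℝ L] [Module.Finite ℝ L]
    [TopologicalSpace L] [IsTopologicalAddGroup L] [ContinuousSMul ℝ L] [T2Space L]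
    [LieRing.IsNilpotent L]
    (C : Set L)
    (hconv : Convex ℝ C)
    (hcone : ∀ (c : ℝ) (v : L), 0 ≤ c → v ∈ C → c • v ∈ C)
    (hclosed : IsClosed C)
    (hpointed : C ∩ (-C) = {0})
    (hgen : Submodule.span ℝ C = ⊤)
    (hinv : ∀ x : L, expAd L x '' C = C) :
    IsLieAbelian L := by
  rcases subsingleton_or_nontrivial L with hL | hL
  · exact ⟨fun x y => Subsingleton.elim _ _⟩
  -- `finrank ℝ L ≥ 1`
  have hrank : 1 ≤ Module.finrank ℝ L := Module.finrank_pos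
  -- Key lemma: if `(ad w)^2 = 0` then `ad w = 0`.
  have key : ∀ w : L, (∀ y : L, ⁅w, ⁅w, y⁆⁆ = 0) → ∀ y : L, ⁅w, y⁆ = 0 := by
    intro w h2 y
    -- `(ad w)^2 = 0`
    have hA2 : (LieAlgebra.ad ℝ L w) ^ 2 = 0 := by
      ext z
      simp only [pow_two, Module.End.mul_apply, LieAlgebra.ad_apply, h2 z,
        LinearMap.zero_apply]
    -- `expAd (t • w) = 1 + t • ad w`
    have hexp : ∀ t : ℝ, expAd L (t • w) = 1 + t • (LieAlgebra.ad ℝ L w) := by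
      intro t
      have hsm : LieAlgebra.ad ℝ L (t • w) = t • LieAlgebra.ad ℝ L w := by
        simp
      have hzero : ∀ k ∈ Finset.range (Module.finrank ℝ L + 1) \ ({0, 1} : Finset ℕ),
          (k.factorial : ℝ)⁻¹ • (LieAlgebra.ad ℝ L (t • w) ^ k) = 0 := by
        intro k hk
        simp only [Finset.mem_sdiff, Finset.mem_insert, Finset.mem_singleton] at hk
        have hk2 : 2 ≤ k := by omega
        have : (LieAlgebra.ad ℝ L (t • w)) ^ k = 0 := by
          rw [hsm, smul_pow]
          rw [pow_eq_zero_of_le hk2 hA2, smul_zero]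
        rw [this, smul_zero]
      have hsub : ({0, 1} : Finset ℕ) ⊆ Finset.range (Module.finrank ℝ L + 1) := by
        intro k hk
        simp only [Finset.mem_insert, Finset.mem_singleton] at hk
        rcases hk with rfl | rfl <;> simp [Finset.mem_range] <;> omega
      have hzero' : ∀ k ∈ Finset.range (Module.finrank ℝ L + 1),
          k ∉ ({0, 1} : Finset ℕ) →
          (k.factorial : ℝ)⁻¹ • (LieAlgebra.ad ℝ L (t • w) ^ k) = 0 := by
        intro k hk1 hk2
        exact hzero k (Finset.mem_sdiff.mpr ⟨hk1, hk2⟩)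
      rw [expAd, ← Finset.sum_subset hsub hzero']
      rw [Finset.sum_insert (by simp), Finset.sum_singleton]
      simp only [Nat.factorial_zero, Nat.factorial_one, Nat.cast_one, inv_one, one_smul,
        pow_zero, pow_one, hsm]
    -- membership of the affine line
    have hmem : ∀ t : ℝ, ∀ c ∈ C, c + t • ⁅w, c⁆ ∈ C := by
      intro t c hc
      have : expAd L (t • w) c ∈ C := by
        rw [← hinv (t • w)]
        exact Set.mem_image_of_mem _ hc
      rwa [hexp t, LinearMap.add_apply, Module.End.one_apply, LinearMap.smul_apply,
        LieAlgebra.ad_apply] at this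
    -- limit argument: for `c ∈ C`, both `⁅w,c⁆` and `-⁅w,c⁆` lie in `C`
    have hlim : ∀ c ∈ C, ∀ v : L, (∀ t : ℝ, c + t • v ∈ C) → v ∈ C := by
      intro c hc v hv
      have hseq : ∀ n : ℕ, (1 / ((n : ℝ) + 1)) • c + v ∈ C := by
        intro n
        have hpos : (0 : ℝ) < (n : ℝ) + 1 := by positivity
        have h1 : (1 / ((n : ℝ) + 1)) • (c + ((n : ℝ) + 1) • v) ∈ C :=
          hcone _ _ (by positivity) (hv ((n : ℝ) + 1))
        rwa [smul_add, smul_smul, one_div, inv_mul_cancel₀ hpos.ne', one_smul, ← one_div] at h1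
      have htend : Filter.Tendsto (fun n : ℕ => (1 / ((n : ℝ) + 1)) • c + v)
          Filter.atTop (nhds v) := by
        have h0 : Filter.Tendsto (fun n : ℕ => (1 / ((n : ℝ) + 1)) • c)
            Filter.atTop (nhds ((0 : ℝ) • c)) :=
          tendsto_one_div_add_atTop_nhds_zero_nat.smul_const c
        rw [zero_smul] at h0
        simpa using h0.add (tendsto_const_nhds (x := v))
      exact hclosed.mem_of_tendsto htend (Filter.Eventually.of_forall hseq)
    -- conclude `⁅w, c⁆ = 0` for `c ∈ C`
    have hzero : ∀ c ∈ C, ⁅w, c⁆ = 0 := by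
      intro c hc
      have h1 : ⁅w, c⁆ ∈ C := hlim c hc _ (fun t => hmem t c hc)
      have h2' : -⁅w, c⁆ ∈ C := by
        refine hlim c hc _ (fun t => ?_)
        have := hmem (-t) c hc
        rwa [neg_smul, ← smul_neg] at this
      have : ⁅w, c⁆ ∈ C ∩ (-C) := ⟨h1, by simpa [Set.mem_neg] using h2'⟩
      rwa [hpointed, Set.mem_singleton_iff] at this
    -- extend to all of `L` by the spanning property
    have hker : (⊤ : Submodule ℝ L) ≤ LinearMap.ker (LieAlgebra.ad ℝ L w) := by
      rw [← hgen]
      refine Submodule.span_le.mpr (fun c hc => ?_)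
      rw [SetLike.mem_coe, LinearMap.mem_ker, LieAlgebra.ad_apply]
      exact hzero c hc
    have := hker (Submodule.mem_top (x := y))
    rwa [LinearMap.mem_ker, LieAlgebra.ad_apply] at this
  -- Descend along the lower central series.
  have step : ∀ n : ℕ, LieModule.lowerCentralSeries ℝ L L (n + 2) = ⊥ →
      LieModule.lowerCentralSeries ℝ L L (n + 1) = ⊥ := by
    intro n h
    rw [LieModule.lowerCentralSeries_succ, LieSubmodule.lie_eq_bot_iff]
    intro x _ m hm
    -- `m ∈ lcs n`; show every bracket with `m` vanishes
    have hbr : ∀ y : L, ⁅m, y⁆ ∈ LieModule.lowerCentralSeries ℝ L L (n + 1) := by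
      intro y
      rw [LieModule.lowerCentralSeries_succ]
      have : ⁅y, m⁆ ∈ ⁅(⊤ : LieIdeal ℝ L), LieModule.lowerCentralSeries ℝ L L n⁆ :=
        LieSubmodule.lie_mem_lie (LieSubmodule.mem_top y) hm
      have h' : -⁅y, m⁆ ∈ ⁅(⊤ : LieIdeal ℝ L), LieModule.lowerCentralSeries ℝ L L n⁆ :=
        neg_mem this
      rwa [← lie_skew, neg_neg] at h'
    have h2 : ∀ y : L, ⁅m, ⁅m, y⁆⁆ = 0 := by
      intro y
      have hmem2 : ⁅m, ⁅m, y⁆⁆ ∈ LieModule.lowerCentralSeries ℝ L L (n + 2) := by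
        rw [LieModule.lowerCentralSeries_succ]
        exact LieSubmodule.lie_mem_lie (LieSubmodule.mem_top m) (hbr y)
      rw [h] at hmem2
      simpa using hmem2
    have := key m h2 x
    rw [← lie_skew, this, neg_zero]
  -- From nilpotency, obtain that the first term is trivial.
  obtain ⟨k, hk⟩ := LieModule.IsNilpotent.nilpotent ℝ L L
  have hdesc : ∀ n : ℕ, LieModule.lowerCentralSeries ℝ L L (n + 1) = ⊥ →
      LieModule.lowerCentralSeries ℝ L L 1 = ⊥ := by
    intro n
    induction n with
    | zero => exact fun h => h
    | succ n ih => exact fun h => ih (step n h)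
  have hk1 : LieModule.lowerCentralSeries ℝ L L (k + 1) = ⊥ := by
    rw [eq_bot_iff, ← hk]
    exact LieModule.antitone_lowerCentralSeries ℝ L L (Nat.le_succ k)
  have habel : LieModule.lowerCentralSeries ℝ L L 1 = ⊥ := hdesc k hk1
  rw [LieModule.lowerCentralSeries_succ, LieSubmodule.lie_eq_bot_iff] at habel
  exact ⟨fun x y => habel x (LieSubmodule.mem_top x) y (LieSubmodule.mem_top y)⟩
end

section
/- Let \(V\) be a finite-dimensional real vector space, \(A \in \operatorname{End}(V)\) diagonalizable over \(\mathbb{R}\), and \(C \subseteq V\) a closed convex cone with \(e^{tA}(C) \subseteq C\) for all \(t \in \mathbb{R}\). If \(\lambda_{\max}\) is the largest eigenvalue of \(A\) and \(p_{\lambda_{\max}}\) is the spectral projection onto the \(\lambda_{\max}\)-eigenspace along the other eigenspaces, then \(p_{\lambda_{\max}}(C) = C \cap \ker(A - \lambda_{\max})\). -/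
open Module

lemma exp_apply_eigen
    (V : Type*) [NormedAddCommGroup V] [NormedSpace ℝ V] [CompleteSpace V]
    (B : V →L[ℝ] V) (μ : ℝ) (v : V) (h : B v = μ • v) :
    NormedSpace.exp B v = Real.exp μ • v := by
  have hpow : ∀ n : ℕ, (B ^ n) v = μ ^ n • v := by
    intro n
    induction n with
    | zero => simp
    | succ n ih =>
      rw [pow_succ, ContinuousLinearMap.mul_apply, h, map_smul, ih, smul_smul, ← pow_succ']
  have hsum := NormedSpace.expSeries_summable' (𝕂 := ℝ) B
  have h1 : NormedSpace.exp B v = ∑' n : ℕ, (((n.factorial : ℝ))⁻¹ • B ^ n) v := by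
    rw [NormedSpace.exp_eq_tsum ℝ]
    exact ((ContinuousLinearMap.apply ℝ V v).map_tsum hsum)
  rw [h1]
  have h2 : ∀ n : ℕ, (((n.factorial : ℝ))⁻¹ • B ^ n) v
      = (μ ^ n / (n.factorial : ℝ)) • v := by
    intro n
    rw [ContinuousLinearMap.smul_apply, hpow n, smul_smul, inv_mul_eq_div]
  simp_rw [h2]
  rw [Summable.tsum_smul_const (Real.summable_pow_div_factorial μ)]
  congr 1
  rw [Real.exp_eq_exp_ℝ, NormedSpace.exp_eq_tsum_div]

/-- Let `A` be a diagonalizable endomorphism of a finite-dimensional real vector space and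
`C` a closed convex cone invariant under `e^{tA}` for all `t`.  If `lmax` is the largest
eigenvalue of `A` and `p` the spectral projection onto the `lmax`-eigenspace along the other
eigenspaces, then `p(C) = C ∩ ker(A - lmax)`. -/
theorem spectral_projection_of_invariant_cone
    (V : Type*) [NormedAddCommGroup V] [NormedSpace ℝ V] [FiniteDimensional ℝ V]
    (A : V →L[ℝ] V)
    (hdiag : (⨆ μ : ℝ, Module.End.eigenspace (A : V →ₗ[ℝ] V) μ) = ⊤)
    (C : Set V)
    (hconv : Convex ℝ C)
    (hcone : ∀ (c : ℝ) (v : V), 0 ≤ c → v ∈ C → c • v ∈ C)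
    (hclosed : IsClosed C)
    (hinv : ∀ t : ℝ, ⇑(NormedSpace.exp (t • A) : V →L[ℝ] V) '' C ⊆ C)
    (lmax : ℝ)
    (hev : Module.End.HasEigenvalue (A : V →ₗ[ℝ] V) lmax)
    (hmax : ∀ μ : ℝ, Module.End.HasEigenvalue (A : V →ₗ[ℝ] V) μ → μ ≤ lmax)
    (p : V →ₗ[ℝ] V)
    (hp1 : ∀ v ∈ Module.End.eigenspace (A : V →ₗ[ℝ] V) lmax, p v = v)
    (hp0 : ∀ μ : ℝ, μ ≠ lmax → ∀ v ∈ Module.End.eigenspace (A : V →ₗ[ℝ] V) μ, p v = 0) :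
    p '' C = C ∩ (Module.End.eigenspace (A : V →ₗ[ℝ] V) lmax : Set V) := by
  classical
  have key : ∀ v ∈ C, p v ∈ C ∩ (Module.End.eigenspace (A : V →ₗ[ℝ] V) lmax : Set V) := by
    intro v hv
    obtain ⟨f, hf, hsum⟩ := (Submodule.mem_iSup_iff_exists_finsupp _ v).mp
      (hdiag ▸ Submodule.mem_top)
    -- p of each eigen-component
    have hpf : ∀ μ ∈ f.support, p (f μ) ∈ Module.End.eigenspace (A : V →ₗ[ℝ] V) lmax := by
      intro μ _
      by_cases hμ : μ = lmax
      · rw [hp1 (f μ) (hμ ▸ hf μ)]; exact hμ ▸ hf μ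
      · rw [hp0 μ hμ (f μ) (hf μ)]; exact Submodule.zero_mem _
    have hpv : p v = ∑ μ ∈ f.support, p (f μ) := by
      rw [← hsum, Finsupp.sum, map_sum]
    have hveig : p v ∈ Module.End.eigenspace (A : V →ₗ[ℝ] V) lmax := by
      rw [hpv]; exact Submodule.sum_mem _ hpf
    refine ⟨?_, hveig⟩
    -- p v ∈ C via the limit
    set g : ℝ → V := fun t => Real.exp (-(t * lmax)) • (NormedSpace.exp (t • A)) v with hg
    have hgC : ∀ t, g t ∈ C := fun t =>
      hcone _ _ (Real.exp_pos _).le (hinv t ⟨v, hv, rfl⟩)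
    have hgsum : ∀ t, g t = ∑ μ ∈ f.support, Real.exp (t * (μ - lmax)) • f μ := by
      intro t
      have hexp : (NormedSpace.exp (t • A)) v
          = ∑ μ ∈ f.support, Real.exp (t * μ) • f μ := by
        conv_lhs => rw [← hsum, Finsupp.sum, map_sum]
        refine Finset.sum_congr rfl fun μ _ => ?_
        refine exp_apply_eigen V (t • A) (t * μ) (f μ) ?_
        have hA : A (f μ) = μ • f μ := Module.End.mem_eigenspace_iff.mp (hf μ)
        rw [ContinuousLinearMap.smul_apply, hA, smul_smul]
      rw [hg]
      simp only [hexp, Finset.smul_sum]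
      refine Finset.sum_congr rfl fun μ _ => ?_
      rw [smul_smul, ← Real.exp_add]
      ring_nf
    have htend : Filter.Tendsto g Filter.atTop (nhds (p v)) := by
      rw [hpv]
      have : Filter.Tendsto (fun t => ∑ μ ∈ f.support, Real.exp (t * (μ - lmax)) • f μ)
          Filter.atTop (nhds (∑ μ ∈ f.support, p (f μ))) := by
        refine tendsto_finset_sum _ fun μ hμ => ?_
        by_cases hμl : μ = lmax
        · subst hμl
          simp only [sub_self, mul_zero, Real.exp_zero, one_smul]
          rw [hp1 (f μ) (hf μ)]
          exact tendsto_const_nhds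
        · rw [hp0 μ hμl (f μ) (hf μ)]
          have hfμ : f μ ≠ 0 := Finsupp.mem_support_iff.mp hμ
          have hevμ : Module.End.HasEigenvalue (A : V →ₗ[ℝ] V) μ :=
            Module.End.hasEigenvalue_of_hasEigenvector ⟨hf μ, hfμ⟩
          have hlt : μ - lmax < 0 := sub_neg.mpr (lt_of_le_of_ne (hmax μ hevμ) hμl)
          have h0 : Filter.Tendsto (fun t : ℝ => Real.exp (t * (μ - lmax)))
              Filter.atTop (nhds 0) :=
            Real.tendsto_exp_atBot.comp (Filter.Tendsto.atTop_mul_const_of_neg hlt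
              Filter.tendsto_id)
          have := h0.smul_const (f μ)
          simpa using this
      exact (Filter.tendsto_congr fun t => (hgsum t).symm).mp this
    exact hclosed.mem_of_tendsto htend (Filter.Eventually.of_forall hgC)
  ext w
  constructor
  · rintro ⟨v, hv, rfl⟩
    exact key v hv
  · rintro ⟨hwC, hweig⟩
    exact ⟨w, hwC, hp1 w hweig⟩
end

section
/- Let \(V\) be a finite-dimensional real vector space, \(A \in \operatorname{End}(V)\) diagonalizable with exactly two eigenvalues \(\lambda_1 < \lambda_2\), and \(C \subseteq V\) a closed convex cone invariant under \(e^{tA}\) for all \(t \in \mathbb{R}\). Then \(C = (C \cap \ker(A - \lambda_1)) + (C \cap \ker(A - \lambda_2))\). -/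
open Pointwise

lemma exp_smul_eigen_aux {V : Type*} [NormedAddCommGroup V] [NormedSpace ℝ V]
    [FiniteDimensional ℝ V]
    (A : V →L[ℝ] V) (μ : ℝ) (v : V) (hv : v ∈ Module.End.eigenspace (A : V →ₗ[ℝ] V) μ)
    (t : ℝ) : (NormedSpace.exp (t • A)) v = Real.exp (t * μ) • v := by
  have hAv : A v = μ • v := Module.End.mem_eigenspace_iff.1 hv
  have hsm : (t • A) v = (t * μ) • v := by
    simp [hAv, smul_smul]
  have hpow : ∀ n : ℕ, ((t • A) ^ n) v = (t * μ) ^ n • v := by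
    intro n
    induction n with
    | zero => simp
    | succ n ih =>
      have : ((t • A) ^ (n + 1)) v = ((t • A) ^ n) ((t • A) v) := by
        rw [pow_succ]; rfl
      rw [this, hsm, map_smul, ih, smul_smul, pow_succ, mul_comm]
  have hsum : Summable fun n : ℕ => ((Nat.factorial n : ℝ)⁻¹) • (t • A) ^ n :=
    NormedSpace.expSeries_summable' (𝕂 := ℝ) (t • A)
  have happ := ContinuousLinearMap.map_tsum (ContinuousLinearMap.apply ℝ V v)
    (f := fun n : ℕ => ((Nat.factorial n : ℝ)⁻¹) • (t • A) ^ n) hsum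
  have hexp : NormedSpace.exp (t • A) = ∑' n : ℕ, ((Nat.factorial n : ℝ)⁻¹) • (t • A) ^ n := by
    rw [NormedSpace.exp_eq_tsum (𝕂 := ℝ)]
  rw [hexp]
  have h1 : (ContinuousLinearMap.apply ℝ V v) (∑' n : ℕ, ((Nat.factorial n : ℝ)⁻¹) • (t • A) ^ n)
      = (∑' n : ℕ, ((Nat.factorial n : ℝ)⁻¹) • (t • A) ^ n) v := rfl
  calc (∑' n : ℕ, ((Nat.factorial n : ℝ)⁻¹) • (t • A) ^ n) v
      = ∑' n : ℕ, (ContinuousLinearMap.apply ℝ V v) (((Nat.factorial n : ℝ)⁻¹) • (t • A) ^ n) := by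
        rw [← h1, happ]
    _ = ∑' n : ℕ, ((Nat.factorial n : ℝ)⁻¹ * (t * μ) ^ n) • v := by
        refine tsum_congr fun n => ?_
        simp [ContinuousLinearMap.apply_apply, hpow n, smul_smul]
    _ = (∑' n : ℕ, (Nat.factorial n : ℝ)⁻¹ * (t * μ) ^ n) • v := by
        refine Summable.tsum_smul_const ?_ v
        simpa using NormedSpace.expSeries_summable' (𝕂 := ℝ) (t * μ)
    _ = Real.exp (t * μ) • v := by
        congr 1
        rw [Real.exp_eq_exp_ℝ, NormedSpace.exp_eq_tsum (𝕂 := ℝ)]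
        simp [smul_eq_mul]

/-- Let `A` be a diagonalizable endomorphism of a finite-dimensional real vector space with
exactly two eigenvalues `l1 < l2`, and `C` a closed convex cone invariant under `e^{tA}` for
all `t ∈ ℝ`.  Then `C = (C ∩ ker(A - l1)) + (C ∩ ker(A - l2))`. -/
theorem cone_decomposition_two_eigenvalues
    (V : Type*) [NormedAddCommGroup V] [NormedSpace ℝ V] [FiniteDimensional ℝ V]
    (A : V →L[ℝ] V)
    (hdiag : (⨆ μ : ℝ, Module.End.eigenspace (A : V →ₗ[ℝ] V) μ) = ⊤)
    (l1 l2 : ℝ) (hlt : l1 < l2)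
    (hspec : ∀ μ : ℝ, Module.End.HasEigenvalue (A : V →ₗ[ℝ] V) μ ↔ (μ = l1 ∨ μ = l2))
    (C : Set V)
    (hconv : Convex ℝ C)
    (hcone : ∀ (c : ℝ) (v : V), 0 ≤ c → v ∈ C → c • v ∈ C)
    (hclosed : IsClosed C)
    (hinv : ∀ t : ℝ, ⇑(NormedSpace.exp (t • A) : V →L[ℝ] V) '' C ⊆ C) :
    C = (C ∩ (Module.End.eigenspace (A : V →ₗ[ℝ] V) l1 : Set V))
        + (C ∩ (Module.End.eigenspace (A : V →ₗ[ℝ] V) l2 : Set V)) := by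
  set E1 := Module.End.eigenspace (A : V →ₗ[ℝ] V) l1 with hE1
  set E2 := Module.End.eigenspace (A : V →ₗ[ℝ] V) l2 with hE2
  have hsup : E1 ⊔ E2 = ⊤ := by
    rw [eq_top_iff, ← hdiag]
    apply iSup_le
    intro μ
    by_cases h1 : μ = l1
    · exact h1 ▸ le_sup_left
    by_cases h2 : μ = l2
    · exact h2 ▸ le_sup_right
    · have hne : ¬ Module.End.HasEigenvalue (A : V →ₗ[ℝ] V) μ := by
        rw [hspec]; tauto
      have hbot : Module.End.eigenspace (A : V →ₗ[ℝ] V) μ = ⊥ := by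
        by_contra h
        exact hne (Module.End.hasEigenvalue_iff.2 h)
      rw [hbot]; exact bot_le
  apply Set.Subset.antisymm
  · intro v hv
    have hvtop : v ∈ E1 ⊔ E2 := by rw [hsup]; exact Submodule.mem_top
    obtain ⟨v1, hv1, v2, hv2, hv12⟩ := Submodule.mem_sup.1 hvtop
    have key : ∀ t : ℝ, (NormedSpace.exp (t • A)) v
        = Real.exp (t * l1) • v1 + Real.exp (t * l2) • v2 := by
      intro t
      rw [← hv12, map_add, exp_smul_eigen_aux A l1 v1 hv1 t, exp_smul_eigen_aux A l2 v2 hv2 t]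
    have hmemC : ∀ t : ℝ, Real.exp (t * l1) • v1 + Real.exp (t * l2) • v2 ∈ C := by
      intro t
      rw [← key]
      exact hinv t ⟨v, hv, rfl⟩
    have hv2C : v2 ∈ C := by
      have hmem : ∀ t : ℝ, Real.exp (t * (l1 - l2)) • v1 + v2 ∈ C := by
        intro t
        have h := hcone (Real.exp (-(t * l2))) _ (Real.exp_pos _).le (hmemC t)
        have heq : Real.exp (-(t * l2)) • (Real.exp (t * l1) • v1 + Real.exp (t * l2) • v2)
            = Real.exp (t * (l1 - l2)) • v1 + v2 := by
          rw [smul_add, smul_smul, smul_smul, ← Real.exp_add, ← Real.exp_add]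
          ring_nf
          rw [Real.exp_zero, one_smul]
        rwa [heq] at h
      have htend : Filter.Tendsto (fun t : ℝ => Real.exp (t * (l1 - l2)) • v1 + v2)
          Filter.atTop (nhds v2) := by
        have h1 : Filter.Tendsto (fun t : ℝ => t * (l1 - l2)) Filter.atTop Filter.atBot :=
          Filter.tendsto_id.atTop_mul_const_of_neg (by linarith)
        have h2 : Filter.Tendsto (fun t : ℝ => Real.exp (t * (l1 - l2))) Filter.atTop
            (nhds 0) := Real.tendsto_exp_atBot.comp h1
        have h3 := (h2.smul_const v1).add_const v2
        simpa using h3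
      exact hclosed.mem_of_tendsto htend (Filter.Eventually.of_forall hmem)
    have hv1C : v1 ∈ C := by
      have hmem : ∀ t : ℝ, v1 + Real.exp (t * (l2 - l1)) • v2 ∈ C := by
        intro t
        have h := hcone (Real.exp (-(t * l1))) _ (Real.exp_pos _).le (hmemC t)
        have heq : Real.exp (-(t * l1)) • (Real.exp (t * l1) • v1 + Real.exp (t * l2) • v2)
            = v1 + Real.exp (t * (l2 - l1)) • v2 := by
          rw [smul_add, smul_smul, smul_smul, ← Real.exp_add, ← Real.exp_add]
          ring_nf
          rw [Real.exp_zero, one_smul]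
        rwa [heq] at h
      have htend : Filter.Tendsto (fun t : ℝ => v1 + Real.exp (t * (l2 - l1)) • v2)
          Filter.atBot (nhds v1) := by
        have h1 : Filter.Tendsto (fun t : ℝ => t * (l2 - l1)) Filter.atBot Filter.atBot :=
          Filter.tendsto_id.atBot_mul_const (by linarith)
        have h2 : Filter.Tendsto (fun t : ℝ => Real.exp (t * (l2 - l1))) Filter.atBot
            (nhds 0) := Real.tendsto_exp_atBot.comp h1
        have h3 := (h2.smul_const v2).const_add v1
        simpa using h3
      exact hclosed.mem_of_tendsto htend (Filter.Eventually.of_forall hmem)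
    exact hv12 ▸ Set.add_mem_add ⟨hv1C, hv1⟩ ⟨hv2C, hv2⟩
  · rintro x ⟨a, ⟨haC, _⟩, b, ⟨hbC, _⟩, rfl⟩
    have hmid : (1/2 : ℝ) • a + (1/2 : ℝ) • b ∈ C :=
      hconv haC hbC (by norm_num) (by norm_num) (by norm_num)
    have := hcone 2 _ (by norm_num) hmid
    have heq : (2 : ℝ) • ((1/2 : ℝ) • a + (1/2 : ℝ) • b) = a + b := by
      rw [smul_add, smul_smul, smul_smul]; norm_num
    rwa [heq] at this
end
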